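/- Let o_n denote the number of independent dominating sets of the ortho-chain hexagonal cactus O_n for n ≥ 1, and set o_0 = 1 (the one-vertex graph O_0 has exactly one maximal independent set). Then, in the ring of formal power series over ℚ, (1 - 3X - 3X²) · (∑_{n≥0} o_n Xⁿ) = 1 + 2X + X². -/

import Mathlib

/-- `S` is an independent dominating set of `G`: pairwise non-adjacent, and every
vertex outside `S` has a neighbour in `S`. -/
def IsIndepDomSet {V : Type*} (G : SimpleGraph V) (S : Finset V) : Prop :=
  (∀ v ∈ S, ∀ w ∈ S, ¬ G.Adj v w) ∧ ∀ v, v ∉ S → ∃ w ∈ S, G.Adj v w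

/-- The ortho-chain hexagonal cactus `O n`: `Sum.inl i` is the cut vertex `x i`
(`0 ≤ i ≤ n`) and `Sum.inr (k, t)` for `t = 0, 1, 2, 3` is `a (k+1)`, `b (k+1)`,
`c (k+1)`, `d (k+1)` respectively (`0 ≤ k ≤ n-1`); the `i`-th hexagon
(`1 ≤ i ≤ n`) is the six-cycle `x (i-1) – x i – a i – b i – c i – d i – x (i-1)`. -/
def orthoHex (n : ℕ) : SimpleGraph (Fin (n + 1) ⊕ Fin n × Fin 4) :=
  SimpleGraph.fromRel fun p q =>
    match p, q with
    | Sum.inl i, Sum.inl j => (i : ℕ) + 1 = (j : ℕ)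
    | Sum.inl i, Sum.inr (k, t) =>
        ((i : ℕ) = (k : ℕ) + 1 ∧ t = 0) ∨ ((i : ℕ) = (k : ℕ) ∧ t = 3)
    | Sum.inr (k, t), Sum.inr (k', t') =>
        k = k' ∧ ((t = 0 ∧ t' = 1) ∨ (t = 1 ∧ t' = 2) ∨ (t = 2 ∧ t' = 3))
    | _, _ => False

/-- The number of independent dominating sets of the ortho-chain hexagonal cactus `O n`. -/
noncomputable def numIDSOrthoHex (n : ℕ) : ℕ :=
  Nat.card {S : Finset (Fin (n + 1) ⊕ Fin n × Fin 4) // IsIndepDomSet (orthoHex n) S}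
/-!
Fix a root `r` of a graph `G` and classify the independent sets `S` that dominate every vertex
except possibly `r` by the status of `r`: in `S`, dominated by `S`, or not dominated. The
independent dominating sets are exactly those of the first two kinds. Gluing a hexagon
`r, y₀, …, y₄` onto `r` and re-rooting at `y₀` changes these three counts by a fixed `3 × 3`
transfer matrix `M`, found by listing the `2⁵` subsets of `{y₀, …, y₄}`; the cactus `O (n + 1)`
is `O n` with a hexagon glued onto `x n`. With `A, B, U` the generating functions of the three
counts of `O n` rooted at `x n`, this says `(1 - X M) (A, B, U) = (1, 0, 1)`, and the claim is
Cramer's rule for `A + B`, the determinant of `1 - X M` being `1 - 3X - 3X²`.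
-/

open Finset

inductive RootStatus
  | mem
  | dominated
  | undominated
  deriving DecidableEq

namespace RootStatus

instance : Fintype RootStatus :=
  ⟨{mem, dominated, undominated}, fun s => by cases s <;> simp⟩

theorem sum_univ {M : Type*} [AddCommMonoid M] (f : RootStatus → M) :
    ∑ s, f s = f mem + f dominated + f undominated := by
  rw [show (univ : Finset RootStatus) = {mem, dominated, undominated} from rfl]
  simp [add_assoc]

def classify (inSet covered : Prop) [Decidable inSet] [Decidable covered] : RootStatus :=
  if inSet then mem else if covered then dominated else undominated

variable {inSet covered : Prop} [Decidable inSet] [Decidable covered]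

theorem classify_eq_mem_iff : classify inSet covered = mem ↔ inSet := by
  unfold classify; split_ifs <;> simp_all

theorem classify_ne_undominated_iff : classify inSet covered ≠ undominated ↔ inSet ∨ covered := by
  unfold classify; split_ifs <;> simp_all

end RootStatus

theorem Nat.card_bind_eq_some {β γ σ τ : Type*} [Finite β] [Finite γ] [Fintype τ]
    (g : β → Option τ) (h : τ → γ → Option σ) (s : σ) :
    Nat.card {p : β × γ // (g p.1).bind (h · p.2) = some s} =
      ∑ t, Nat.card {b // g b = some t} * Nat.card {c // h t c = some s} := by
  let pair (x : Σ t, {b // g b = some t} × {c // h t c = some s}) :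
      {p : β × γ // (g p.1).bind (h · p.2) = some s} :=
    ⟨(x.2.1, x.2.2), by simp [x.2.1.2, x.2.2.2]⟩
  have hpair : Function.Bijective pair := by
    constructor
    · rintro ⟨t, ⟨b, hb⟩, ⟨c, hc⟩⟩ ⟨t', ⟨b', hb'⟩, ⟨c', hc'⟩⟩ heq
      simp only [pair, Subtype.mk.injEq, Prod.mk.injEq] at heq
      obtain ⟨rfl, rfl⟩ := heq
      obtain rfl : t = t' := Option.some_injective _ (hb.symm.trans hb')
      rfl
    · rintro ⟨⟨b, c⟩, hp⟩
      obtain ⟨t, hb, hc⟩ := Option.bind_eq_some_iff.mp hp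
      exact ⟨⟨t, ⟨b, hb⟩, ⟨c, hc⟩⟩, rfl⟩
  simp only [← Nat.card_eq_of_bijective pair hpair, Nat.card_sigma, Nat.card_prod]

namespace SimpleGraph

section RootedCounts

variable {V W : Type*} (G : SimpleGraph V) (r : V)

def IsIndepDomSetExcept (S : Finset V) : Prop :=
  (∀ v ∈ S, ∀ w ∈ S, ¬ G.Adj v w) ∧ ∀ v, v ≠ r → v ∉ S → ∃ w ∈ S, G.Adj v w

open Classical in
noncomputable def rootStatus (S : Finset V) : Option RootStatus :=
  if G.IsIndepDomSetExcept r S then some (.classify (r ∈ S) (∃ w ∈ S, G.Adj r w)) else none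

noncomputable def rootCount (s : RootStatus) : ℕ :=
  Nat.card {S : Finset V // G.rootStatus r S = some s}

theorem isIndepDomSet_iff_rootStatus (S : Finset V) :
    IsIndepDomSet G S ↔ G.rootStatus r S = some .mem ∨ G.rootStatus r S = some .dominated := by
  unfold IsIndepDomSet rootStatus IsIndepDomSetExcept RootStatus.classify
  by_cases hr : r ∈ S <;> by_cases hc : ∃ w ∈ S, G.Adj r w <;> simp only [hr, hc] <;>
    split_ifs <;> grind

theorem card_isIndepDomSet [Finite V] :
    Nat.card {S // IsIndepDomSet G S} = G.rootCount r .mem + G.rootCount r .dominated := by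
  rw [Nat.card_congr (Equiv.subtypeEquivRight (G.isIndepDomSet_iff_rootStatus r)),
    Nat.card_congr (subtypeOrEquiv _ _ ?_), Nat.card_sum, rootCount, rootCount]
  exact fun S h h' x hx => by simpa [h x hx] using h' x hx

theorem rootCount_of_subsingleton [Subsingleton V] :
    G.rootCount r .mem = 1 ∧ G.rootCount r .dominated = 0 ∧ G.rootCount r .undominated = 1 := by
  have hstatus (S : Finset V) :
      G.rootStatus r S = some (if r ∈ S then .mem else .undominated) := by
    have hpartial : G.IsIndepDomSetExcept r S :=
      ⟨fun v _ w _ => Subsingleton.elim v w ▸ G.loopless.irrefl v,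
        fun v hv => absurd (Subsingleton.elim v r) hv⟩
    have hcov : ¬ ∃ w ∈ S, G.Adj r w := fun ⟨w, _, h⟩ =>
      G.loopless.irrefl w (Subsingleton.elim r w ▸ h)
    simp [rootStatus, hpartial, hcov, RootStatus.classify]
  simp only [rootCount, hstatus, Option.some.injEq]
  refine ⟨Nat.card_eq_one_iff_exists.mpr ⟨⟨{r}, by simp⟩, ?_⟩, ?_,
    Nat.card_eq_one_iff_exists.mpr ⟨⟨∅, by simp⟩, ?_⟩⟩
  · rintro ⟨S, hS⟩
    ext v
    simp [Subsingleton.elim v r, by simpa using hS]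
  · exact Nat.card_eq_zero.mpr (.inl ⟨fun ⟨S, hS⟩ => by split_ifs at hS⟩)
  · rintro ⟨S, hS⟩
    ext v
    simp [Subsingleton.elim v r, by simpa using hS]

variable {G r} {H : SimpleGraph W}

theorem rootStatus_iso (φ : G ≃g H) {S : Finset V} {T : Finset W} (hST : ∀ v, φ v ∈ T ↔ v ∈ S) :
    H.rootStatus (φ r) T = G.rootStatus r S := by
  have hpartial : H.IsIndepDomSetExcept (φ r) T ↔ G.IsIndepDomSetExcept r S := by
    rw [IsIndepDomSetExcept, φ.surjective.forall, φ.surjective.forall]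
    simp only [φ.surjective.forall, φ.surjective.exists, hST, φ.map_adj_iff, φ.injective.ne_iff,
      IsIndepDomSetExcept]
  have hcov : (∃ w ∈ T, H.Adj (φ r) w) ↔ ∃ v ∈ S, G.Adj r v := by
    simp only [φ.surjective.exists, hST, φ.map_adj_iff]
  classical
  simp only [rootStatus, hpartial, hcov, hST]

theorem rootCount_iso (φ : G ≃g H) (s : RootStatus) : H.rootCount (φ r) s = G.rootCount r s :=
  Nat.card_congr <| (φ.toEquiv.finsetCongr.subtypeEquiv fun S => by
    rw [rootStatus_iso φ (T := φ.toEquiv.finsetCongr S) fun _ => Finset.mem_map' _]).symm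

end RootedCounts

instance (n : ℕ) : DecidableRel (pathGraph n).Adj :=
  fun _ _ => decidable_of_iff' _ pathGraph_adj

variable {V : Type*} (G : SimpleGraph V) (r : V)

/-- `inr i` is the vertex `yᵢ` of the hexagon `r, y₀, y₁, y₂, y₃, y₄` glued onto `G` at `r`. -/
def attachHexagon : SimpleGraph (V ⊕ Fin 5) where
  Adj
    | .inl v, .inl w => G.Adj v w
    | .inl v, .inr i | .inr i, .inl v => v = r ∧ (i = 0 ∨ i = 4)
    | .inr i, .inr j => (pathGraph 5).Adj i j
  symm := ⟨by
    rintro (v | i) (w | j) h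
    exacts [h.symm, h, h, h.symm]⟩
  loopless := ⟨by
    rintro (v | i) h
    exacts [G.loopless.irrefl v h, (pathGraph 5).loopless.irrefl i h]⟩

section AttachHexagon

variable {G r}

@[simp] theorem attachHexagon_adj_inl_inl {v w : V} :
    (G.attachHexagon r).Adj (.inl v) (.inl w) ↔ G.Adj v w := .rfl

@[simp] theorem attachHexagon_adj_inl_inr {v : V} {i : Fin 5} :
    (G.attachHexagon r).Adj (.inl v) (.inr i) ↔ v = r ∧ (i = 0 ∨ i = 4) := .rfl

@[simp] theorem attachHexagon_adj_inr_inl {v : V} {i : Fin 5} :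
    (G.attachHexagon r).Adj (.inr i) (.inl v) ↔ v = r ∧ (i = 0 ∨ i = 4) := .rfl

@[simp] theorem attachHexagon_adj_inr_inr {i j : Fin 5} :
    (G.attachHexagon r).Adj (.inr i) (.inr j) ↔ (pathGraph 5).Adj i j := .rfl

end AttachHexagon

end SimpleGraph

open SimpleGraph

/-- `B ⊆ {y₀, …, y₄}` extends a set `A` that is independent and dominates all of `G` but `r` to a
set with the same property for the new root `y₀`; `rootIn` stands for `r ∈ A` and `rootCovered`
for `r` being in `A` or dominated by `A`. -/
abbrev IsHexagonCompletion (rootIn rootCovered : Prop) (B : Finset (Fin 5)) : Prop :=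
  (∀ i ∈ B, ∀ j ∈ B, ¬ (pathGraph 5).Adj i j) ∧ (rootIn → 0 ∉ B ∧ 4 ∉ B) ∧
    (rootCovered ∨ 0 ∈ B ∨ 4 ∈ B) ∧
    ∀ i, i ≠ 0 → i ∉ B → (∃ j ∈ B, (pathGraph 5).Adj i j) ∨ (i = 4 ∧ rootIn)

namespace RootStatus

def hexagonStep (s : RootStatus) (B : Finset (Fin 5)) : Option RootStatus :=
  if IsHexagonCompletion (s = mem) (s ≠ undominated) B then
    some (classify (0 ∈ B) (1 ∈ B ∨ s = mem))
  else none

def hexagonTransfer (s s' : RootStatus) : ℕ := #{B | hexagonStep s B = some s'}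

theorem sum_mul_hexagonTransfer_mem (f : RootStatus → ℕ) :
    ∑ s, f s * hexagonTransfer s mem = 2 * f dominated + 2 * f undominated := by
  have h : hexagonTransfer mem mem = 0 ∧ hexagonTransfer dominated mem = 2 ∧
      hexagonTransfer undominated mem = 2 := by decide
  rw [sum_univ, h.1, h.2.1, h.2.2]
  ring

theorem sum_mul_hexagonTransfer_dominated (f : RootStatus → ℕ) :
    ∑ s, f s * hexagonTransfer s dominated = 2 * f mem + 2 * f dominated + f undominated := by
  have h : hexagonTransfer mem dominated = 2 ∧ hexagonTransfer dominated dominated = 2 ∧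
      hexagonTransfer undominated dominated = 1 := by decide
  rw [sum_univ, h.1, h.2.1, h.2.2]
  ring

theorem sum_mul_hexagonTransfer_undominated (f : RootStatus → ℕ) :
    ∑ s, f s * hexagonTransfer s undominated = f dominated + f undominated := by
  have h : hexagonTransfer mem undominated = 0 ∧ hexagonTransfer dominated undominated = 1 ∧
      hexagonTransfer undominated undominated = 1 := by decide
  rw [sum_univ, h.1, h.2.1, h.2.2]
  ring

end RootStatus

namespace SimpleGraph

variable {V : Type*} (G : SimpleGraph V) (r : V)

theorem attachHexagon_disjSum_independent_iff (A : Finset V) (B : Finset (Fin 5)) :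
    (∀ x ∈ A.disjSum B, ∀ y ∈ A.disjSum B, ¬(G.attachHexagon r).Adj x y) ↔
      (∀ v ∈ A, ∀ w ∈ A, ¬G.Adj v w) ∧ (∀ i ∈ B, ∀ j ∈ B, ¬ (pathGraph 5).Adj i j) ∧
        (r ∈ A → 0 ∉ B ∧ 4 ∉ B) := by
  simp only [Sum.forall, Finset.inl_mem_disjSum, Finset.inr_mem_disjSum, attachHexagon_adj_inl_inl,
    attachHexagon_adj_inl_inr, attachHexagon_adj_inr_inl, attachHexagon_adj_inr_inr]
  grind

theorem attachHexagon_disjSum_dominates_iff (A : Finset V) (B : Finset (Fin 5)) :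
    (∀ x, x ≠ .inr 0 → x ∉ A.disjSum B → ∃ y ∈ A.disjSum B, (G.attachHexagon r).Adj x y) ↔
      (∀ v, v ≠ r → v ∉ A → ∃ w ∈ A, G.Adj v w) ∧
        ((r ∈ A ∨ ∃ w ∈ A, G.Adj r w) ∨ 0 ∈ B ∨ 4 ∈ B) ∧
        ∀ i, i ≠ 0 → i ∉ B → (∃ j ∈ B, (pathGraph 5).Adj i j) ∨ (i = 4 ∧ r ∈ A) := by
  simp only [Sum.forall, Sum.exists, Finset.inl_mem_disjSum, Finset.inr_mem_disjSum,
    attachHexagon_adj_inl_inl, attachHexagon_adj_inl_inr, attachHexagon_adj_inr_inl,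
    attachHexagon_adj_inr_inr, ne_eq, reduceCtorEq, Sum.inr.injEq]
  grind

theorem isIndepDomSetExcept_attachHexagon_iff (A : Finset V) (B : Finset (Fin 5)) :
    (G.attachHexagon r).IsIndepDomSetExcept (.inr 0) (A.disjSum B) ↔
      G.IsIndepDomSetExcept r A ∧ IsHexagonCompletion (r ∈ A) (r ∈ A ∨ ∃ w ∈ A, G.Adj r w) B := by
  rw [IsIndepDomSetExcept, IsIndepDomSetExcept, attachHexagon_disjSum_independent_iff,
    attachHexagon_disjSum_dominates_iff]
  constructor
  · rintro ⟨⟨hA, hB, hroot⟩, hdomA, hdom⟩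
    exact ⟨⟨hA, hdomA⟩, hB, hroot, hdom⟩
  · rintro ⟨⟨hA, hdomA⟩, hB, hroot, hdom⟩
    exact ⟨⟨hA, hB, hroot⟩, hdomA, hdom⟩

theorem exists_adj_attachHexagon_root_iff (A : Finset V) (B : Finset (Fin 5)) :
    (∃ y ∈ A.disjSum B, (G.attachHexagon r).Adj (.inr 0) y) ↔ 1 ∈ B ∨ r ∈ A := by
  simp only [Sum.exists, Finset.inl_mem_disjSum, Finset.inr_mem_disjSum, attachHexagon_adj_inr_inl,
    attachHexagon_adj_inr_inr, pathGraph_adj]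
  grind

theorem rootStatus_attachHexagon (A : Finset V) (B : Finset (Fin 5)) :
    (G.attachHexagon r).rootStatus (.inr 0) (A.disjSum B) =
      (G.rootStatus r A).bind (·.hexagonStep B) := by
  classical
  simp only [rootStatus, isIndepDomSetExcept_attachHexagon_iff, exists_adj_attachHexagon_root_iff,
    Finset.inr_mem_disjSum]
  by_cases hA : G.IsIndepDomSetExcept r A
  · simp only [hA, true_and, if_true, Option.bind_some, RootStatus.hexagonStep,
      RootStatus.classify_eq_mem_iff, RootStatus.classify_ne_undominated_iff]
  · simp only [hA, false_and, if_false, Option.bind_none]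

theorem rootCount_attachHexagon [Finite V] (s' : RootStatus) :
    (G.attachHexagon r).rootCount (.inr 0) s' = ∑ s, G.rootCount r s * s.hexagonTransfer s' := by
  have e : {S // (G.attachHexagon r).rootStatus (.inr 0) S = some s'} ≃
      {p : Finset V × Finset (Fin 5) // (G.rootStatus r p.1).bind (·.hexagonStep p.2) = some s'} :=
    Finset.sumEquiv.toEquiv.subtypeEquiv fun S => by
      simp [← rootStatus_attachHexagon, Finset.toLeft_disjSum_toRight]
  simp only [rootCount, Nat.card_congr e, Nat.card_bind_eq_some, RootStatus.hexagonTransfer,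
    Nat.card_eq_fintype_card, Fintype.card_subtype]

end SimpleGraph

section orthoHex

variable {n : ℕ}

@[simp] theorem orthoHex_adj_inl_inl {i j : Fin (n + 1)} :
    (orthoHex n).Adj (.inl i) (.inl j) ↔ (i : ℕ) + 1 = j ∨ (j : ℕ) + 1 = i := by
  simp only [orthoHex, fromRel_adj, ne_eq, Sum.inl.injEq, Fin.ext_iff]
  omega

@[simp] theorem orthoHex_adj_inl_inr {i : Fin (n + 1)} {k : Fin n} {t : Fin 4} :
    (orthoHex n).Adj (.inl i) (.inr (k, t)) ↔ (i : ℕ) = k + 1 ∧ t = 0 ∨ (i : ℕ) = k ∧ t = 3 := by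
  simp [orthoHex]

@[simp] theorem orthoHex_adj_inr_inl {i : Fin (n + 1)} {k : Fin n} {t : Fin 4} :
    (orthoHex n).Adj (.inr (k, t)) (.inl i) ↔ (i : ℕ) = k + 1 ∧ t = 0 ∨ (i : ℕ) = k ∧ t = 3 := by
  rw [adj_comm, orthoHex_adj_inl_inr]

@[simp] theorem orthoHex_adj_inr_inr {k k' : Fin n} {t t' : Fin 4} :
    (orthoHex n).Adj (.inr (k, t)) (.inr (k', t')) ↔
      k = k' ∧ ((t : ℕ) + 1 = t' ∨ (t' : ℕ) + 1 = t) := by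
  simp only [orthoHex, fromRel_adj]
  fin_cases t <;> fin_cases t' <;> simp <;> tauto

variable (n) in
def orthoHexSuccEquiv :
    (Fin (n + 1) ⊕ Fin n × Fin 4) ⊕ Fin 5 ≃ Fin (n + 1 + 1) ⊕ Fin (n + 1) × Fin 4 where
  toFun
    | .inl (.inl i) => .inl i.castSucc
    | .inl (.inr (k, t)) => .inr (k.castSucc, t)
    | .inr j => Fin.cases (.inl (Fin.last _)) (fun t => .inr (Fin.last _, t)) j
  invFun
    | .inl i => Fin.lastCases (.inr 0) (fun i => .inl (.inl i)) i
    | .inr (k, t) => Fin.lastCases (.inr t.succ) (fun k => .inl (.inr (k, t))) k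
  left_inv := by
    rintro ((i | ⟨k, t⟩) | j)
    · simp
    · simp
    · cases j using Fin.cases <;> simp
  right_inv := by
    rintro (i | ⟨k, t⟩)
    · cases i using Fin.lastCases <;> simp
    · cases k using Fin.lastCases <;> simp

@[simp] theorem orthoHexSuccEquiv_inl_inl (i : Fin (n + 1)) :
    orthoHexSuccEquiv n (.inl (.inl i)) = .inl i.castSucc := rfl

@[simp] theorem orthoHexSuccEquiv_inl_inr (k : Fin n) (t : Fin 4) :
    orthoHexSuccEquiv n (.inl (.inr (k, t))) = .inr (k.castSucc, t) := rfl

@[simp] theorem orthoHexSuccEquiv_inr_zero :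
    orthoHexSuccEquiv n (.inr 0) = .inl (Fin.last (n + 1)) := rfl

@[simp] theorem orthoHexSuccEquiv_inr_succ (t : Fin 4) :
    orthoHexSuccEquiv n (.inr t.succ) = .inr (Fin.last n, t) := rfl

variable (n) in
def orthoHexSuccIso : (orthoHex n).attachHexagon (.inl (Fin.last n)) ≃g orthoHex (n + 1) where
  toEquiv := orthoHexSuccEquiv n
  map_rel_iff' {a b} := by
    rcases a with ((i | ⟨k, t⟩) | j) <;> rcases b with ((i' | ⟨k', t'⟩) | j') <;>
      (try cases j using Fin.cases) <;> (try cases j' using Fin.cases)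
    all_goals simp only [orthoHexSuccEquiv_inl_inl, orthoHexSuccEquiv_inl_inr,
      orthoHexSuccEquiv_inr_zero, orthoHexSuccEquiv_inr_succ, attachHexagon_adj_inl_inl,
      attachHexagon_adj_inl_inr, attachHexagon_adj_inr_inl, attachHexagon_adj_inr_inr,
      orthoHex_adj_inl_inl, orthoHex_adj_inl_inr, orthoHex_adj_inr_inl, orthoHex_adj_inr_inr,
      pathGraph_adj, Fin.val_castSucc, Fin.val_last, Fin.val_succ, Fin.ext_iff, Sum.inl.injEq,
      reduceCtorEq, false_and, Fin.coe_ofNat_eq_mod, or_false, false_or, and_true, true_and,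
      iff_false, Nat.reduceMod, Nat.reduceAdd]
    all_goals omega

end orthoHex

noncomputable def orthoHexRootCount (n : ℕ) (s : RootStatus) : ℕ :=
  (orthoHex n).rootCount (.inl (Fin.last n)) s

theorem numIDSOrthoHex_eq (n : ℕ) :
    numIDSOrthoHex n = orthoHexRootCount n .mem + orthoHexRootCount n .dominated :=
  card_isIndepDomSet _ _

theorem orthoHexRootCount_zero :
    orthoHexRootCount 0 .mem = 1 ∧ orthoHexRootCount 0 .dominated = 0 ∧
      orthoHexRootCount 0 .undominated = 1 :=
  have : Subsingleton (Fin (0 + 1) ⊕ Fin 0 × Fin 4) :=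
    ⟨by rintro (i | ⟨k, _⟩) (j | ⟨k', _⟩); exacts [congrArg _ (Fin.ext (by omega)), k'.elim0,
      k.elim0, k.elim0]⟩
  rootCount_of_subsingleton _ _

theorem orthoHexRootCount_succ (n : ℕ) (s' : RootStatus) :
    orthoHexRootCount (n + 1) s' = ∑ s, orthoHexRootCount n s * s.hexagonTransfer s' :=
  (rootCount_iso (orthoHexSuccIso n) s').trans (rootCount_attachHexagon _ _ s')

theorem orthoHexRootCount_succ_mem (n : ℕ) :
    orthoHexRootCount (n + 1) .mem =
      2 * orthoHexRootCount n .dominated + 2 * orthoHexRootCount n .undominated := by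
  rw [orthoHexRootCount_succ, RootStatus.sum_mul_hexagonTransfer_mem]

theorem orthoHexRootCount_succ_dominated (n : ℕ) :
    orthoHexRootCount (n + 1) .dominated = 2 * orthoHexRootCount n .mem +
      2 * orthoHexRootCount n .dominated + orthoHexRootCount n .undominated := by
  rw [orthoHexRootCount_succ, RootStatus.sum_mul_hexagonTransfer_dominated]

theorem orthoHexRootCount_succ_undominated (n : ℕ) :
    orthoHexRootCount (n + 1) .undominated =
      orthoHexRootCount n .dominated + orthoHexRootCount n .undominated := by
  rw [orthoHexRootCount_succ, RootStatus.sum_mul_hexagonTransfer_undominated]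

open PowerSeries in
/-- In `ℚ⟦X⟧`, `(1 - 3X - 3X²) · ∑_{n≥0} o_n Xⁿ = 1 + 2X + X²`, where `o n` is the
number of independent dominating sets of `O n` (and `o 0 = 1`, `O 0` being the
one-vertex graph). -/
theorem numIDSOrthoHex_generating_function :
    (1 - 3 * PowerSeries.X - 3 * PowerSeries.X ^ 2) *
        PowerSeries.mk (fun n : ℕ => (numIDSOrthoHex n : ℚ)) =
      1 + 2 * PowerSeries.X + PowerSeries.X ^ 2 := by
  set A : ℚ⟦X⟧ := mk fun n => (orthoHexRootCount n .mem : ℚ)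
  set B : ℚ⟦X⟧ := mk fun n => (orthoHexRootCount n .dominated : ℚ)
  set U : ℚ⟦X⟧ := mk fun n => (orthoHexRootCount n .undominated : ℚ)
  obtain ⟨hA₀, hB₀, hU₀⟩ := orthoHexRootCount_zero
  have h2 : (2 : ℚ⟦X⟧) = C 2 := (map_ofNat C 2).symm
  have hA : A = 1 + X * (2 * B + 2 * U) := by
    ext (_ | n) <;> simp [A, B, U, h2, coeff_succ_X_mul, hA₀, orthoHexRootCount_succ_mem]
  have hB : B = X * (2 * A + 2 * B + U) := by
    ext (_ | n) <;> simp [A, B, U, h2, coeff_succ_X_mul, hB₀, orthoHexRootCount_succ_dominated]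
  have hU : U = 1 + X * (B + U) := by
    ext (_ | n) <;> simp [B, U, coeff_succ_X_mul, hU₀, orthoHexRootCount_succ_undominated]
  have hsum : mk (fun n => (numIDSOrthoHex n : ℚ)) = A + B := by
    ext n
    simp [A, B, numIDSOrthoHex_eq]
  rw [hsum]
  -- the coefficients form the row vector `(1, 1, 0) · adj (1 - X M)`
  linear_combination (1 - X - X ^ 2) * hA + (1 + X) * hB + (3 * X + 2 * X ^ 2) * hU
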